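/- arXiv:0909.1139 — 2 statements merged into one kernel-verified Lean document; each statement's English description precedes it below -/
import Mathlib

section
/- The grafting product on n_T satisfies the pre-Lie identity: for all rooted trees T1, T2, T3 (and hence, by bilinearity, for all elements of n_T), (T1*T2)*T3 − T1*(T2*T3) = (T2*T1)*T3 − T2*(T1*T3). Consequently the Connes–Kreimer bracket [T1,T2] = T1*T2 − T2*T1 makes n_T a Lie algebra over ℚ. -/
/-!
Let `Δ F = ∑_C P_C(F) ⊗ R_C(F)` be the admissible-cut coproduct. The coefficient of `T` in
`T₁ * (T₂ * T₃)` is the coefficient of `T₁ ⊗ T₂ ⊗ T₃` in `(id ⊗ Δ) Δ T`: cut off `T₁`, then cut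
the root part. In `(Δ ⊗ id) Δ T` (cut, then cut the pruned part) the same coefficient is the
coefficient of `T` in `(T₁ * T₂) * T₃`, coming from cuts whose pruned part is a single tree, plus
the number of cuts of `T` at two incomparable edges with pruned trees `T₁`, `T₂` and root part
`T₃`, which is symmetric in `T₁` and `T₂`. So the pre-Lie identity follows from coassociativity,
which holds because both iterates are multiplicative under disjoint union of forests and satisfy
the same recursion on a single tree. A left pre-Lie algebra is Lie-admissible, so the commutator
of grafting is a Lie bracket.
-/

open scoped Classical

/-- Concrete (labeled) rooted trees: a root with a list of subtrees. -/
inductive RTree : Type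
  | node : List RTree → RTree

/-- Shapes of admissible cuts: at each tree, either the full cut
(everything, including the root, goes to the pruned part `P`), or a choice of
an admissible cut of each child subtree.  A `full` occurring strictly inside
corresponds to cutting the edge above that vertex. -/
inductive CutShape : Type
  | full
  | branch : List CutShape → CutShape

namespace CK

/-- Number of vertices of a forest. -/
def sizeL : List RTree → ℕ
  | [] => 0
  | .node l :: ts => 1 + sizeL l + sizeL ts

/-- All admissible cuts of a forest (a choice of admissible cut of each tree). -/
def cutsF : List RTree → List (List CutShape)
  | [] => [[]]
  | .node l :: ts =>
      (CutShape.full :: (cutsF l).map CutShape.branch).flatMap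
        fun c => (cutsF ts).map (c :: ·)

/-- The root part `R_C(F)` of a cut. -/
def Rcut : List RTree → List CutShape → List RTree
  | [], _ => []
  | _ :: _, [] => []
  | .node _ :: ts, .full :: cs => Rcut ts cs
  | .node l :: ts, .branch ds :: cs => RTree.node (Rcut l ds) :: Rcut ts cs

/-- The pruned part `P_C(F)` of a cut. -/
def Pcut : List RTree → List CutShape → List RTree
  | [], _ => []
  | _ :: _, [] => []
  | .node l :: ts, .full :: cs => RTree.node l :: Pcut ts cs
  | .node l :: ts, .branch ds :: cs => Pcut l ds ++ Pcut ts cs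

/-- Number of `full`s occurring in a cut. -/
def fullsL : List CutShape → ℕ
  | [] => 0
  | .full :: cs => 1 + fullsL cs
  | .branch ds :: cs => fullsL ds + fullsL cs

/-- A list of concrete forests containing (representatives of) every forest
with at most `n` vertices. -/
def forestsUpTo : ℕ → List (List RTree)
  | 0 => [[]]
  | n+1 => [] :: (forestsUpTo n).flatMap fun l => (forestsUpTo n).map fun F => RTree.node l :: F

/-- Isomorphism of rooted trees (non-planar): a root-preserving bijection, i.e.
the lists of subtrees agree up to permutation and isomorphism. -/
inductive Iso : RTree → RTree → Prop
  | node {l₁ l l₂ : List RTree} : List.Forall₂ Iso l₁ l → l.Perm l₂ → Iso (.node l₁) (.node l₂)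

/-- Isomorphism classes of rooted trees. -/
abbrev TreeClass : Type := Quot Iso

/-- Isomorphism classes of rooted forests = multisets of tree classes.
The empty forest is `0`. -/
abbrev ForestClass : Type := Multiset TreeClass

/-- Isomorphism class of a tree. -/
def clT (t : RTree) : TreeClass := Quot.mk _ t

/-- Isomorphism class of a forest. -/
def clF (F : List RTree) : ForestClass := (F.map clT : List TreeClass)

/-- A concrete representative of a forest class. -/
noncomputable def repF (M : ForestClass) : List RTree := M.toList.map Quot.out

/-- A concrete representative of a tree class. -/
noncomputable def repT (T : TreeClass) : RTree := T.out

/-- Number of vertices of a forest class. -/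
noncomputable def sizeC (M : ForestClass) : ℕ := sizeL (repF M)

/-- Number of vertices of a tree class. -/
noncomputable def sizeT (T : TreeClass) : ℕ := sizeL [repT T]

/-- The Hall algebra `H`: finitely supported ℚ-valued functions on
isomorphism classes of rooted forests, with basis the delta functions. -/
abbrev H : Type := ForestClass →₀ ℚ

/-- The basis element `δ_A` of `H`. -/
noncomputable def delta (A : ForestClass) : H := Finsupp.single A 1

/-- `n(A,B;M)`: the number of admissible cuts `C` of `M` with
`P_C(M) ≅ A` and `R_C(M) ≅ B`. -/
noncomputable def nCuts (A B M : ForestClass) : ℕ :=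
  (cutsF (repF M)).countP fun c =>
    decide (clF (Pcut (repF M) c) = A ∧ clF (Rcut (repF M) c) = B)

/-- A finite set of forest classes containing all classes with at most `n`
vertices. -/
noncomputable def forestCand (n : ℕ) : Finset ForestClass :=
  ((forestsUpTo n).map clF).toFinset

/-- A finite set of tree classes containing all classes with at most `n+1`
vertices. -/
noncomputable def treeCand (n : ℕ) : Finset TreeClass :=
  ((forestsUpTo n).map fun F => clT (RTree.node F)).toFinset

/-- The Hall product on basis elements: `δ_A × δ_B = Σ_M n(A,B;M)·δ_M`
(every `M` with `n(A,B;M) ≠ 0` has exactly `sizeC A + sizeC B` vertices). -/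
noncomputable def mulBasis (A B : ForestClass) : H :=
  ∑ M ∈ forestCand (sizeC A + sizeC B), (nCuts A B M : ℚ) • delta M

/-- The Hall product on `H`, extended bilinearly from basis elements. -/
noncomputable def hmul (f g : H) : H :=
  f.sum fun A a => g.sum fun B b => (a * b) • mulBasis A B

/-- The Connes-Kreimer Lie algebra `n_T` (as a vector space): the span of
isomorphism classes of rooted trees. -/
abbrev nT : Type := TreeClass →₀ ℚ

/-- The basis element of `n_T` corresponding to a rooted tree `T`. -/
noncomputable def tau (T : TreeClass) : nT := Finsupp.single T 1

/-- `a(T₁,T₂;T)`: the number of edges `e` of `T` such that the single-edge cut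
at `e` has pruned part `≅ T₁` and root part `≅ T₂`. -/
noncomputable def aCount (T₁ T₂ T : TreeClass) : ℕ :=
  (cutsF [repT T]).countP fun c =>
    decide (fullsL c = 1 ∧ clF (Pcut [repT T] c) = ({T₁} : Multiset TreeClass)
      ∧ clF (Rcut [repT T] c) = ({T₂} : Multiset TreeClass))

/-- The grafting (pre-Lie) product on basis elements:
`T₁ * T₂ = Σ_T a(T₁,T₂;T)·T`. -/
noncomputable def graftBasis (T₁ T₂ : TreeClass) : nT :=
  ∑ T ∈ treeCand (sizeT T₁ + sizeT T₂), (aCount T₁ T₂ T : ℚ) • tau T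

/-- The grafting (pre-Lie) product on `n_T`, extended bilinearly. -/
noncomputable def graft (x y : nT) : nT :=
  x.sum fun T₁ a => y.sum fun T₂ b => (a * b) • graftBasis T₁ T₂

/-- The Connes-Kreimer bracket `[x,y] = x*y - y*x` on `n_T`. -/
noncomputable def ckBracket (x y : nT) : nT := graft x y - graft y x

/-- `Ẽ_A δ_B = Σ_C δ_{R_C(B)}`, the sum over admissible cuts `C` of `B` with
`P_C(B) ≅ A`. -/
noncomputable def elimBasis (A B : ForestClass) : H :=
  (((cutsF (repF B)).filter fun c => decide (clF (Pcut (repF B) c) = A)).map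
    fun c => delta (clF (Rcut (repF B) c))).sum

/-- The elimination operator `E_A` (here on `H ≅ H*`, identifying `φ_B` with
`δ_B`). -/
noncomputable def elim (A : ForestClass) : H →ₗ[ℚ] H :=
  Finsupp.lsum ℚ fun B => LinearMap.toSpanSingleton ℚ H (elimBasis A B)

/-- `Ẽ^top_A δ_B = Σ_C δ_{P_C(B)}`, the sum over admissible cuts `C` of `B`
with `R_C(B) ≅ A`. -/
noncomputable def topElimBasis (A B : ForestClass) : H :=
  (((cutsF (repF B)).filter fun c => decide (clF (Rcut (repF B) c) = A)).map
    fun c => delta (clF (Pcut (repF B) c))).sum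

/-- The top-elimination operator `E^top_A`. -/
noncomputable def topElim (A : ForestClass) : H →ₗ[ℚ] H :=
  Finsupp.lsum ℚ fun B => LinearMap.toSpanSingleton ℚ H (topElimBasis A B)

/-- `H ⊗ H`, realized as finitely supported functions on pairs of classes. -/
abbrev H2 : Type := (ForestClass × ForestClass) →₀ ℚ

/-- `Δ(δ_M) = Σ δ_A ⊗ δ_B`, the sum over ordered pairs `(A,B)` of classes with
`A ⊔ B ≅ M`. -/
noncomputable def deltaBasis (M : ForestClass) : H2 :=
  ∑ A ∈ M.powerset.toFinset, Finsupp.single (A, M - A) 1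

/-- The coproduct `Δ : H → H ⊗ H`. -/
noncomputable def coprod : H →ₗ[ℚ] H2 :=
  Finsupp.lsum ℚ fun M => LinearMap.toSpanSingleton ℚ H2 (deltaBasis M)

/-! ### Admissible cuts -/

lemma sizeL_cons (t : RTree) (ts : List RTree) : sizeL (t :: ts) = sizeL [t] + sizeL ts := by
  cases t; simp only [sizeL]; omega

lemma sizeL_append (F G : List RTree) : sizeL (F ++ G) = sizeL F + sizeL G := by
  induction F with
  | nil => simp [sizeL]
  | cons t ts ih => rw [List.cons_append, sizeL_cons, ih, sizeL_cons t ts]; omega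

lemma sizeL_perm {F G : List RTree} (h : F.Perm G) : sizeL F = sizeL G := by
  induction h with
  | nil => rfl
  | cons t _ ih => rw [sizeL_cons, ih, ← sizeL_cons]
  | swap t u ts =>
    have := sizeL_cons u (t :: ts); have := sizeL_cons t ts
    have := sizeL_cons t (u :: ts); have := sizeL_cons u ts
    omega
  | trans _ _ ih₁ ih₂ => exact ih₁.trans ih₂

lemma mem_cutsF_cons {l ts : List RTree} {c : List CutShape} :
    c ∈ cutsF (.node l :: ts) ↔
      (∃ cs ∈ cutsF ts, c = .full :: cs) ∨
        ∃ ds ∈ cutsF l, ∃ cs ∈ cutsF ts, c = .branch ds :: cs := by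
  simp only [cutsF, List.mem_flatMap, List.mem_cons, List.mem_map]
  constructor
  · rintro ⟨a, rfl | ⟨ds, hds, rfl⟩, cs, hcs, rfl⟩
    exacts [Or.inl ⟨cs, hcs, rfl⟩, Or.inr ⟨ds, hds, cs, hcs, rfl⟩]
  · rintro (⟨cs, hcs, rfl⟩ | ⟨ds, hds, cs, hcs, rfl⟩)
    exacts [⟨_, Or.inl rfl, cs, hcs, rfl⟩, ⟨_, Or.inr ⟨ds, hds, rfl⟩, cs, hcs, rfl⟩]

lemma length_eq_of_mem_cutsF : ∀ {F : List RTree} {c : List CutShape}, c ∈ cutsF F →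
    c.length = F.length
  | [], c, hc => by simp_all [cutsF]
  | .node l :: ts, c, hc => by
    rcases mem_cutsF_cons.1 hc with ⟨cs, hcs, rfl⟩ | ⟨ds, -, cs, hcs, rfl⟩ <;>
      simp [length_eq_of_mem_cutsF hcs]

lemma cutsF_append : ∀ F G : List RTree,
    cutsF (F ++ G) = (cutsF F).flatMap fun a => (cutsF G).map (a ++ ·)
  | [], G => by simp [cutsF]
  | .node l :: ts, G => by
    simp only [List.cons_append, cutsF, cutsF_append ts G, List.flatMap_assoc, List.map_flatMap,
      List.flatMap_map, List.map_map, Function.comp_def]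

lemma Pcut_append : ∀ {F : List RTree} {a : List CutShape} (G : List RTree) (b : List CutShape),
    a.length = F.length → Pcut (F ++ G) (a ++ b) = Pcut F a ++ Pcut G b
  | [], [], _, _, _ => by simp [Pcut]
  | .node l :: ts, .full :: a, G, b, h => by
    simp [Pcut, Pcut_append G b (by simpa using h)]
  | .node l :: ts, .branch ds :: a, G, b, h => by
    simp [Pcut, Pcut_append G b (by simpa using h)]

lemma Rcut_append : ∀ {F : List RTree} {a : List CutShape} (G : List RTree) (b : List CutShape),
    a.length = F.length → Rcut (F ++ G) (a ++ b) = Rcut F a ++ Rcut G b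
  | [], [], _, _, _ => by simp [Rcut]
  | .node l :: ts, .full :: a, G, b, h => by
    simp [Rcut, Rcut_append G b (by simpa using h)]
  | .node l :: ts, .branch ds :: a, G, b, h => by
    simp [Rcut, Rcut_append G b (by simpa using h)]

lemma length_Pcut : ∀ {F : List RTree} {c : List CutShape}, c ∈ cutsF F →
    (Pcut F c).length = fullsL c
  | [], c, hc => by simp_all [cutsF, Pcut, fullsL]
  | .node l :: ts, c, hc => by
    rcases mem_cutsF_cons.1 hc with ⟨cs, hcs, rfl⟩ | ⟨ds, hds, cs, hcs, rfl⟩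
    · simp [Pcut, fullsL, length_Pcut hcs, Nat.add_comm]
    · simp [Pcut, fullsL, length_Pcut hcs, length_Pcut hds]

lemma length_le_length_Pcut_add_length_Rcut : ∀ {F : List RTree} {c : List CutShape},
    c ∈ cutsF F → F.length ≤ (Pcut F c).length + (Rcut F c).length
  | [], c, hc => by simp
  | .node l :: ts, c, hc => by
    rcases mem_cutsF_cons.1 hc with ⟨cs, hcs, rfl⟩ | ⟨ds, -, cs, hcs, rfl⟩ <;>
    · have := length_le_length_Pcut_add_length_Rcut hcs
      simp only [Pcut, Rcut, List.length_cons, List.length_append]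
      omega

lemma sizeL_Pcut_add_sizeL_Rcut : ∀ {F : List RTree} {c : List CutShape}, c ∈ cutsF F →
    sizeL (Pcut F c) + sizeL (Rcut F c) = sizeL F
  | [], c, hc => by simp_all [cutsF, Pcut, Rcut, sizeL]
  | .node l :: ts, c, hc => by
    rcases mem_cutsF_cons.1 hc with ⟨cs, hcs, rfl⟩ | ⟨ds, hds, cs, hcs, rfl⟩
    · have := sizeL_Pcut_add_sizeL_Rcut hcs
      simp only [Pcut, Rcut, sizeL]; omega
    · have := sizeL_Pcut_add_sizeL_Rcut hcs
      have := sizeL_Pcut_add_sizeL_Rcut hds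
      simp only [Pcut, Rcut, sizeL, sizeL_append]; omega

/-! ### Isomorphism invariance -/

lemma clF_nil : clF [] = 0 := rfl

lemma clF_cons (t : RTree) (ts : List RTree) : clF (t :: ts) = clT t ::ₘ clF ts := rfl

lemma clF_append (F G : List RTree) : clF (F ++ G) = clF F + clF G := by
  simp [clF]

lemma clF_singleton (t : RTree) : clF [t] = {clT t} := rfl

lemma card_clF (F : List RTree) : Multiset.card (clF F) = F.length := by
  simp [clF]

lemma clF_repF (M : ForestClass) : clF (repF M) = M := by
  simp [clF, repF, clT, Function.comp_def]

lemma clF_repT (T : TreeClass) : clF [repT T] = {T} := by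
  simp [clF_singleton, clT, repT]

lemma clF_eq_clF_of_forall₂ {F G : List RTree} (h : List.Forall₂ Iso F G) : clF F = clF G := by
  induction h with
  | nil => rfl
  | cons hab _ ih => rw [clF_cons, clF_cons, ih, clT, clT, Quot.sound hab]

lemma clF_eq_clF_of_perm {F G : List RTree} (h : F.Perm G) : clF F = clF G :=
  Multiset.coe_eq_coe.2 (h.map clT)

lemma eq_of_clT_eq {β : Sort*} (f : RTree → β) (hf : ∀ a b, Iso a b → f a = f b) {a b : RTree}
    (h : clT a = clT b) : f a = f b :=
  congrArg (Quot.lift f hf) h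

theorem Iso.refl : ∀ t : RTree, Iso t t
  | .node l => .node (List.forall₂_same.2 fun t _ => Iso.refl t) (.refl l)

lemma clT_node_perm {F G : List RTree} (h : F.Perm G) : clT (.node F) = clT (.node G) :=
  Quot.sound (.node (List.forall₂_same.2 fun t _ => Iso.refl t) h)

lemma clT_node_cons_left {t t' : RTree} (h : clT t = clT t') (ts : List RTree) :
    clT (.node (t :: ts)) = clT (.node (t' :: ts)) :=
  eq_of_clT_eq (fun u => clT (.node (u :: ts))) (fun _ _ hu =>
    Quot.sound (.node (.cons hu (List.forall₂_same.2 fun t _ => Iso.refl t)) (.refl _))) h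

lemma clT_node_cons_right (t : RTree) {ts ts' : List RTree}
    (h : clT (.node ts) = clT (.node ts')) : clT (.node (t :: ts)) = clT (.node (t :: ts')) :=
  eq_of_clT_eq (fun | .node l => clT (.node (t :: l)))
    (fun | _, _, .node h₁ h₂ => Quot.sound (.node (.cons (Iso.refl t) h₁) (h₂.cons t))) h

lemma clF_eq_of_clT_node_eq {l l' : List RTree} (h : clT (.node l) = clT (.node l')) :
    clF l = clF l' :=
  eq_of_clT_eq (fun | .node l => clF l)
    (fun | _, _, .node h₁ h₂ => (clF_eq_clF_of_forall₂ h₁).trans (clF_eq_clF_of_perm h₂)) h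

lemma exists_perm_forall₂_of_clF_eq {F G : List RTree} (h : clF F = clF G) :
    ∃ F', F.Perm F' ∧ List.Forall₂ (fun a b => clT a = clT b) F' G := by
  have hF : List.Forall₂ (fun a x => clT a = x) F (F.map clT) := by simp [List.forall₂_same]
  have hcomp : Relation.Comp (List.Forall₂ _) List.Perm F (G.map clT) :=
    ⟨_, hF, Multiset.coe_eq_coe.1 h⟩
  rw [List.forall₂_comp_perm_eq_perm_comp_forall₂] at hcomp
  obtain ⟨F', hperm, hF'⟩ := hcomp
  exact ⟨F', hperm, List.forall₂_map_right_iff.1 hF'⟩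

theorem eq_of_clF_eq {β : Sort*} (Φ : List RTree → β)
    (hperm : ∀ {F G : List RTree}, F.Perm G → Φ F = Φ G)
    (hcons : ∀ {l l' ts ts' : List RTree}, clF l = clF l' → Φ l = Φ l' → Φ ts = Φ ts' →
      Φ (.node l :: ts) = Φ (.node l' :: ts'))
    {F G : List RTree} (h : clF F = clF G) : Φ F = Φ G := by
  induction hn : sizeL F using Nat.strong_induction_on generalizing F G with
  | _ n ih =>
    obtain ⟨F', hperm', hF'⟩ := exists_perm_forall₂_of_clF_eq h
    rw [hperm hperm']
    replace hn : sizeL F' ≤ n := (sizeL_perm hperm').symm.trans hn |>.le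
    clear hperm' h
    induction hF' with
    | nil => rfl
    | @cons a b F₀ G₀ hab _ ihF₀ =>
      obtain ⟨la⟩ := a
      obtain ⟨lb⟩ := b
      have hsize : sizeL (.node la :: F₀) = 1 + sizeL la + sizeL F₀ := by
        simp only [sizeL]
      exact hcons (clF_eq_of_clT_node_eq hab)
        (ih _ (by omega) (clF_eq_of_clT_node_eq hab) rfl) (ihF₀ (by omega))

lemma clT_node_congr {F G : List RTree} (h : clF F = clF G) :
    clT (.node F) = clT (.node G) :=
  eq_of_clF_eq (fun F => clT (.node F)) clT_node_perm
    (fun {_ _ ts _} _ hl hts => (clT_node_cons_left hl ts).trans (clT_node_cons_right _ hts)) h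

lemma sizeL_congr {F G : List RTree} (h : clF F = clF G) : sizeL F = sizeL G :=
  eq_of_clF_eq sizeL sizeL_perm (fun _ hl hts => by simp only [sizeL, hl, hts]) h

lemma sizeT_eq_sizeL {F : List RTree} {T : TreeClass} (h : clF F = {T}) : sizeT T = sizeL F :=
  sizeL_congr ((clF_repT T).trans h.symm)

noncomputable def bPlus (M : ForestClass) : TreeClass := clT (.node (repF M))

lemma bPlus_clF (F : List RTree) : bPlus (clF F) = clT (.node F) :=
  clT_node_congr (clF_repF (clF F))

/-! ### Multisets -/

def addConv {M : Type*} [Add M] (s t : Multiset M) : Multiset M :=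
  s.bind fun a => t.map (a + ·)

section addConv

variable {α M N : Type*} [AddCommMonoid M] [AddCommMonoid N]

lemma singleton_addConv_singleton (a b : M) : addConv {a} {b} = {a + b} := by
  simp [addConv]

lemma bind_addConv (s : Multiset α) (f : α → Multiset M) (t : Multiset M) :
    addConv (s.bind f) t = s.bind fun a => addConv (f a) t := by
  simp [addConv, Multiset.bind_assoc]

lemma addConv_bind (s : Multiset M) (t : Multiset α) (g : α → Multiset M) :
    addConv s (t.bind g) = t.bind fun b => addConv s (g b) := by
  simp only [addConv, Multiset.map_bind]
  exact Multiset.bind_bind _ _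

lemma addConv_left_comm (s t u : Multiset M) :
    addConv s (addConv t u) = addConv t (addConv s u) := by
  simp only [addConv, Multiset.map_bind, Multiset.map_map, Function.comp_def]
  rw [Multiset.bind_bind]
  simp only [add_left_comm]

lemma addConv_map_map {m n : Multiset M} (f g h : M → N) (hfgh : ∀ x y, f x + g y = h (x + y)) :
    addConv (m.map f) (n.map g) = (addConv m n).map h := by
  simp [addConv, Multiset.bind_map, Multiset.map_bind, hfgh]

lemma filter_addConv {s t : Multiset M} (p p₁ p₂ : M → Prop) [DecidablePred p]
    [DecidablePred p₁] [DecidablePred p₂] (h : ∀ a ∈ s, ∀ b ∈ t, p (a + b) ↔ p₁ a ∧ p₂ b) :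
    (addConv s t).filter p = addConv (s.filter p₁) (t.filter p₂) := by
  induction s using Multiset.induction_on with
  | empty => simp [addConv]
  | cons a s ih =>
    have hs := ih fun a ha => h a (Multiset.mem_cons_of_mem ha)
    simp only [addConv] at hs ⊢
    rw [Multiset.cons_bind, Multiset.filter_add, hs, Multiset.filter_cons, Multiset.filter_map]
    split_ifs with ha
    · rw [Multiset.singleton_add, Multiset.cons_bind]
      congr 2
      exact Multiset.filter_congr fun b hb => (h a (Multiset.mem_cons_self a s) b hb).trans
        (and_iff_right ha)
    · have hnil : t.filter (p ∘ (a + ·)) = 0 := Multiset.filter_eq_nil.2 fun b hb hab =>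
        ha ((h a (Multiset.mem_cons_self a s) b hb).1 hab).1
      rw [hnil, Multiset.map_zero, zero_add, zero_add]

end addConv

lemma sum_map_filter {α : Type*} (s : Multiset α) (p : α → Prop) [DecidablePred p] (f : α → ℕ) :
    ((s.filter p).map f).sum = (s.map fun a => if p a then f a else 0).sum := by
  induction s using Multiset.induction_on with
  | empty => simp
  | cons a s ih => by_cases h : p a <;> simp [h, ih]

lemma sum_mul_countP_eq_sum_filter {α β : Type*} [DecidableEq β] (m : Multiset α) (q : α → Prop)
    [DecidablePred q] (g : α → Multiset β) (s : Finset β) (f : Multiset β → ℕ)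
    (h : ∀ x ∈ m, q x → f (g x) ≠ 0 → ∃ b ∈ s, g x = {b}) :
    ∑ b ∈ s, f {b} * m.countP (fun x => q x ∧ g x = {b}) = ((m.filter q).map (f ∘ g)).sum := by
  rw [sum_map_filter]
  induction m using Multiset.induction_on with
  | empty => simp
  | cons a m ih =>
    have hfiber : ∑ b ∈ s, f {b} * (if q a ∧ g a = {b} then 1 else 0) =
        if q a then f (g a) else 0 := by
      by_cases hq : q a
      · by_cases hf : f (g a) = 0
        · simp only [hq, true_and, if_true, hf]
          exact Finset.sum_eq_zero fun b _ => by split_ifs with hb <;> simp_all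
        · obtain ⟨b₀, hb₀, hgb₀⟩ := h a (Multiset.mem_cons_self a m) hq hf
          simp [hq, hgb₀, Multiset.singleton_inj, hb₀]
      · simp [hq]
    simp only [Multiset.countP_cons, mul_add, Finset.sum_add_distrib, Multiset.map_cons,
      Multiset.sum_cons, ih fun x hx => h x (Multiset.mem_cons_of_mem hx), hfiber,
      Function.comp_apply, add_comm]

/-! ### Cut statistics -/

noncomputable def cutStat (F : List RTree) (c : List CutShape) : ForestClass × ForestClass :=
  (clF (Pcut F c), clF (Rcut F c))

noncomputable def cutStats (F : List RTree) : Multiset (ForestClass × ForestClass) :=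
  (cutsF F : Multiset (List CutShape)).map (cutStat F)

lemma bind_cutsF_append {β : Type*} (F G : List RTree) (f : List CutShape → Multiset β) :
    (cutsF (F ++ G) : Multiset (List CutShape)).bind f =
      (cutsF F : Multiset (List CutShape)).bind fun a =>
        (cutsF G : Multiset (List CutShape)).bind fun b => f (a ++ b) := by
  rw [cutsF_append, ← Multiset.coe_bind, Multiset.bind_assoc]
  simp only [← Multiset.map_coe, Multiset.bind_map]

lemma cutStat_append {F : List RTree} {a : List CutShape} (ha : a ∈ cutsF F) (G : List RTree)
    (b : List CutShape) : cutStat (F ++ G) (a ++ b) = cutStat F a + cutStat G b := by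
  simp [cutStat, Pcut_append G b (length_eq_of_mem_cutsF ha),
    Rcut_append G b (length_eq_of_mem_cutsF ha), clF_append]

lemma cutStats_append (F G : List RTree) :
    cutStats (F ++ G) = addConv (cutStats F) (cutStats G) := by
  simp only [cutStats, ← Multiset.bind_singleton, bind_cutsF_append, bind_addConv]
  refine Multiset.bind_congr fun a ha => ?_
  simp only [addConv_bind, singleton_addConv_singleton, cutStat_append (Multiset.mem_coe.1 ha)]

lemma cutStats_cons (t : RTree) (ts : List RTree) :
    cutStats (t :: ts) = addConv (cutStats [t]) (cutStats ts) :=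
  cutStats_append [t] ts

lemma cutStats_nil : cutStats [] = {0} := by
  simp [cutStats, cutsF, cutStat, Pcut, Rcut, clF]

lemma cutStats_perm {F G : List RTree} (h : F.Perm G) : cutStats F = cutStats G := by
  induction h with
  | nil => rfl
  | cons t _ ih => rw [cutStats_cons, ih, ← cutStats_cons]
  | swap t u ts =>
    rw [cutStats_cons u (t :: ts), cutStats_cons t ts, cutStats_cons t (u :: ts),
      cutStats_cons u ts, addConv_left_comm]
  | trans _ _ ih₁ ih₂ => exact ih₁.trans ih₂

lemma cutsF_node (l : List RTree) :
    cutsF [.node l] = [.full] :: (cutsF l).map fun ds => [.branch ds] := by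
  simp only [cutsF, List.map_cons, List.map_nil]
  induction cutsF l <;> simp_all

lemma Pcut_node_full (l : List RTree) : Pcut [.node l] [.full] = [.node l] := by
  simp [Pcut]

lemma Rcut_node_full (l : List RTree) : Rcut [.node l] [.full] = [] := by
  simp [Rcut]

lemma Pcut_node_branch (l : List RTree) (ds : List CutShape) :
    Pcut [.node l] [.branch ds] = Pcut l ds := by
  simp [Pcut]

lemma Rcut_node_branch (l : List RTree) (ds : List CutShape) :
    Rcut [.node l] [.branch ds] = [.node (Rcut l ds)] := by
  simp [Rcut]

lemma cutStat_node_branch (l : List RTree) (ds : List CutShape) :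
    cutStat [.node l] [.branch ds] = ((cutStat l ds).1, {bPlus (cutStat l ds).2}) := by
  simp [cutStat, Pcut_node_branch, Rcut_node_branch, clF_singleton, bPlus_clF]

lemma cutStats_node (l : List RTree) :
    cutStats [.node l] =
      ({clT (.node l)}, 0) ::ₘ (cutStats l).map fun s => (s.1, {bPlus s.2}) := by
  simp only [cutStats, cutsF_node, ← Multiset.cons_coe, ← Multiset.map_coe, Multiset.map_cons,
    Multiset.map_map, Function.comp_def, cutStat_node_branch]
  congr 1
  simp only [cutStat, Pcut_node_full, Rcut_node_full, clF_singleton, clF_nil]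

lemma cutStats_congr {F G : List RTree} (h : clF F = clF G) : cutStats F = cutStats G :=
  eq_of_clF_eq cutStats cutStats_perm (fun hl hcs hts => by
    rw [cutStats_cons, cutStats_node, hcs, hts, clT_node_congr hl, ← cutStats_node,
      ← cutStats_cons]) h

lemma nCuts_clF (A B : ForestClass) (F : List RTree) :
    nCuts A B (clF F) = (cutStats F).count (A, B) := by
  rw [nCuts, ← cutStats_congr (clF_repF (clF F)), cutStats, Multiset.count_map,
    ← Multiset.countP_eq_card_filter, Multiset.coe_countP]
  simp [cutStat, eq_comm]

lemma aCount_eq_nCuts (X Y T : TreeClass) : aCount X Y T = nCuts {X} {Y} {T} := by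
  rw [← clF_repT T, nCuts_clF, aCount, cutStats, Multiset.count_map,
    ← Multiset.countP_eq_card_filter, Multiset.coe_countP]
  refine List.countP_congr fun c hc => ?_
  have hlen : clF (Pcut [repT T] c) = {X} → fullsL c = 1 := fun h => by
    rw [← length_Pcut hc, ← card_clF, h, Multiset.card_singleton]
  simp only [cutStat, decide_eq_true_eq, Prod.mk.injEq]
  tauto

lemma sizeL_eq_of_mem_cutStats {F : List RTree} {X Y : TreeClass}
    (h : (({X}, {Y}) : ForestClass × ForestClass) ∈ cutStats F) :
    sizeL F = sizeT X + sizeT Y := by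
  obtain ⟨c, hc, hXY⟩ := Multiset.mem_map.1 h
  simp only [cutStat, Prod.mk.injEq] at hXY
  rw [← sizeL_Pcut_add_sizeL_Rcut (Multiset.mem_coe.1 hc), sizeT_eq_sizeL hXY.1,
    sizeT_eq_sizeL hXY.2]

lemma sizeT_eq_of_aCount_ne_zero {X Y T : TreeClass} (h : aCount X Y T ≠ 0) :
    sizeT T = sizeT X + sizeT Y := by
  rw [aCount_eq_nCuts, ← clF_repT T, nCuts_clF, Multiset.count_ne_zero] at h
  exact sizeL_eq_of_mem_cutStats h

lemma exists_mem_forestsUpTo : ∀ (n : ℕ) (F : List RTree), sizeL F ≤ n →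
    ∃ F' ∈ forestsUpTo n, clF F' = clF F
  | _, [], _ => ⟨[], by cases ‹ℕ› <;> simp [forestsUpTo], rfl⟩
  | 0, .node l :: ts, h => absurd h (by simp [sizeL])
  | n + 1, .node l :: ts, h => by
    have hsize : sizeL (.node l :: ts) = 1 + sizeL l + sizeL ts := by simp only [sizeL]
    obtain ⟨l', hl', hl⟩ := exists_mem_forestsUpTo n l (by omega)
    obtain ⟨ts', hts', hts⟩ := exists_mem_forestsUpTo n ts (by omega)
    refine ⟨.node l' :: ts', ?_, by rw [clF_cons, clF_cons, hts, clT_node_congr hl]⟩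
    simp only [forestsUpTo, List.mem_cons, List.mem_flatMap, List.mem_map]
    exact Or.inr ⟨l', hl', ts', hts', rfl⟩

lemma mem_treeCand {T : TreeClass} {n : ℕ} (h : sizeT T ≤ n + 1) : T ∈ treeCand n := by
  rcases hl : repT T with ⟨l⟩
  have hsize : sizeT T = 1 + sizeL l := by simp [sizeT, hl, sizeL]
  obtain ⟨l', hl', hll'⟩ := exists_mem_forestsUpTo n l (by omega)
  simp only [treeCand, List.mem_toFinset, List.mem_map]
  exact ⟨l', hl', by rw [clT_node_congr hll', ← hl, clT, repT, Quot.out_eq]⟩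

lemma filter_cutStats_fst_eq_zero : ∀ F : List RTree,
    (cutStats F).filter (·.1 = 0) = {(0, clF F)}
  | [] => by rw [cutStats_nil, Multiset.filter_singleton, if_pos Prod.fst_zero]; rfl
  | .node l :: ts => by
    rw [cutStats_cons, filter_addConv _ (·.1 = 0) (·.1 = 0) fun a _ b _ => add_eq_zero,
      filter_cutStats_fst_eq_zero ts, cutStats_node, Multiset.filter_cons_of_neg _ (by simp),
      Multiset.filter_map]
    simp only [Function.comp_def, filter_cutStats_fst_eq_zero l, Multiset.map_singleton,
      singleton_addConv_singleton, bPlus_clF, clF_cons]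
    rfl

lemma length_le_card_add_card {F : List RTree} {s : ForestClass × ForestClass}
    (hs : s ∈ cutStats F) : F.length ≤ Multiset.card s.1 + Multiset.card s.2 := by
  obtain ⟨c, hc, rfl⟩ := Multiset.mem_map.1 hs
  simpa [cutStat, card_clF] using length_le_length_Pcut_add_length_Rcut (Multiset.mem_coe.1 hc)

lemma filter_cutStats_singleton (t : RTree) :
    (cutStats [t]).filter (fun s => Multiset.card s.1 + Multiset.card s.2 = 1) =
      {({clT t}, 0), (0, {clT t})} := by
  obtain ⟨l⟩ := t
  rw [cutStats_node, Multiset.filter_cons_of_pos _ (by simp), Multiset.filter_map,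
    Multiset.filter_congr (q := (·.1 = 0)) fun s _ => by simp, filter_cutStats_fst_eq_zero,
    Multiset.map_singleton, bPlus_clF]
  rfl

/-- The cuts of `F` with `|P| + |R| = |F|` cut off some trees of `F` entirely and leave the others
untouched, so exchanging `P` and `R` amounts to complementing the set of trees cut off. -/
noncomputable def tightCutStats (F : List RTree) : Multiset (ForestClass × ForestClass) :=
  (cutStats F).filter fun s => Multiset.card s.1 + Multiset.card s.2 = F.length

lemma map_swap_tightCutStats : ∀ F : List RTree, (tightCutStats F).map Prod.swap = tightCutStats F
  | [] => by simp [tightCutStats, cutStats_nil, Multiset.filter_singleton]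
  | t :: ts => by
    have htight : ∀ a ∈ cutStats [t], ∀ b ∈ cutStats ts,
        Multiset.card (a + b).1 + Multiset.card (a + b).2 = (t :: ts).length ↔
          Multiset.card a.1 + Multiset.card a.2 = 1 ∧
            Multiset.card b.1 + Multiset.card b.2 = ts.length := fun a ha b hb => by
      have := length_le_card_add_card ha
      have := length_le_card_add_card hb
      simp only [Prod.fst_add, Prod.snd_add, Multiset.card_add, List.length_cons] at *
      omega
    have hts := map_swap_tightCutStats ts
    rw [tightCutStats] at hts ⊢
    rw [cutStats_cons, filter_addConv _ _ _ htight,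
      ← addConv_map_map Prod.swap Prod.swap Prod.swap fun _ _ => rfl, hts,
      filter_cutStats_singleton]
    simp only [Multiset.insert_eq_cons, Multiset.map_cons, Multiset.map_singleton,
      Prod.swap_prod_mk]
    rw [← Multiset.singleton_add, ← Multiset.singleton_add, add_comm]

lemma count_cutStats_eq_zero {F : List RTree} (h₁ : F.length ≠ 1) (h₂ : F.length ≠ 2)
    (X Y : TreeClass) : (cutStats F).count ({X}, {Y}) = 0 := by
  refine Multiset.count_eq_zero.2 fun hmem => ?_
  have := length_le_card_add_card hmem
  obtain rfl : F = [] := List.eq_nil_of_length_eq_zero (by simp at this; omega)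
  simp [cutStats_nil] at hmem

lemma count_cutStats_comm {F : List RTree} (hF : F.length ≠ 1) (X Y : TreeClass) :
    (cutStats F).count ({X}, {Y}) = (cutStats F).count ({Y}, {X}) := by
  by_cases h₂ : F.length = 2
  · have htight : ∀ A B : TreeClass,
        (cutStats F).count ({A}, {B}) = (tightCutStats F).count ({A}, {B}) := fun A B => by
      rw [tightCutStats, Multiset.count_filter_of_pos (by simp [h₂])]
    rw [htight, htight]
    nth_rewrite 1 [← map_swap_tightCutStats]
    exact Multiset.count_map_eq_count' _ _ Prod.swap_injective
      (({Y}, {X}) : ForestClass × ForestClass)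
  · rw [count_cutStats_eq_zero hF h₂, count_cutStats_eq_zero hF h₂]

/-! ### Coassociativity -/

noncomputable def recutRootStats (F : List RTree) :
    Multiset (ForestClass × ForestClass × ForestClass) :=
  (cutsF F : Multiset (List CutShape)).bind fun c =>
    (cutStats (Rcut F c)).map (Prod.mk (clF (Pcut F c)))

noncomputable def recutPrunedStats (F : List RTree) :
    Multiset (ForestClass × ForestClass × ForestClass) :=
  (cutsF F : Multiset (List CutShape)).bind fun c =>
    (cutStats (Pcut F c)).map fun s => (s.1, s.2, clF (Rcut F c))

lemma recutRootStats_append (F G : List RTree) :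
    recutRootStats (F ++ G) = addConv (recutRootStats F) (recutRootStats G) := by
  simp only [recutRootStats, bind_cutsF_append, bind_addConv]
  refine Multiset.bind_congr fun a ha => ?_
  simp only [addConv_bind]
  refine Multiset.bind_congr fun b _ => ?_
  have ha := length_eq_of_mem_cutsF (Multiset.mem_coe.1 ha)
  rw [Rcut_append G b ha, Pcut_append G b ha, cutStats_append, clF_append]
  exact (addConv_map_map _ _ _ fun _ _ => rfl).symm

lemma recutPrunedStats_append (F G : List RTree) :
    recutPrunedStats (F ++ G) = addConv (recutPrunedStats F) (recutPrunedStats G) := by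
  simp only [recutPrunedStats, bind_cutsF_append, bind_addConv]
  refine Multiset.bind_congr fun a ha => ?_
  simp only [addConv_bind]
  refine Multiset.bind_congr fun b _ => ?_
  have ha := length_eq_of_mem_cutsF (Multiset.mem_coe.1 ha)
  rw [Rcut_append G b ha, Pcut_append G b ha, cutStats_append, clF_append]
  exact (addConv_map_map _ _ _ fun _ _ => rfl).symm

lemma recutRootStats_node (l : List RTree) :
    recutRootStats [.node l] = ({clT (.node l)}, 0, 0) ::ₘ
      ((cutStats l).map (fun s => (s.1, {bPlus s.2}, 0)) +
        (recutRootStats l).map fun s => (s.1, s.2.1, {bPlus s.2.2})) := by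
  rw [recutRootStats, cutsF_node, ← Multiset.cons_coe, Multiset.cons_bind, ← Multiset.map_coe,
    Multiset.bind_map]
  simp only [Pcut_node_full, Rcut_node_full, Pcut_node_branch, Rcut_node_branch, cutStats_nil,
    cutStats_node, Multiset.map_singleton, Multiset.map_cons, Multiset.map_map, Function.comp_def,
    Multiset.bind_cons]
  simp only [recutRootStats, cutStats, cutStat, Multiset.map_bind, Multiset.map_map,
    Function.comp_def, bPlus_clF, clF_singleton, Multiset.singleton_add]
  rfl

lemma recutPrunedStats_node (l : List RTree) :
    recutPrunedStats [.node l] = ({clT (.node l)}, 0, 0) ::ₘ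
      ((cutStats l).map (fun s => (s.1, {bPlus s.2}, 0)) +
        (recutPrunedStats l).map fun s => (s.1, s.2.1, {bPlus s.2.2})) := by
  rw [recutPrunedStats, cutsF_node, ← Multiset.cons_coe, Multiset.cons_bind, ← Multiset.map_coe,
    Multiset.bind_map]
  simp only [Pcut_node_full, Rcut_node_full, Pcut_node_branch, Rcut_node_branch, cutStats_node,
    Multiset.map_cons, Multiset.map_map, Function.comp_def, recutPrunedStats, Multiset.map_bind,
    clF_nil, clF_singleton, bPlus_clF, Multiset.cons_add]

/-- Coassociativity of the Connes–Kreimer coproduct: cutting the root part of a cut again, or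
cutting its pruned part again, yields the same multiset of (top, middle, bottom) classes. -/
theorem recutRootStats_eq_recutPrunedStats : ∀ F : List RTree,
    recutRootStats F = recutPrunedStats F
  | [] => by simp [recutRootStats, recutPrunedStats, cutsF, Pcut, Rcut, cutStats_nil, clF_nil]; rfl
  | .node l :: ts => by
    rw [← List.singleton_append, recutRootStats_append, recutPrunedStats_append,
      recutRootStats_node, recutPrunedStats_node, recutRootStats_eq_recutPrunedStats l,
      recutRootStats_eq_recutPrunedStats ts]

lemma count_recutRootStats (F : List RTree) (A B C : ForestClass) :
    (recutRootStats F).count (A, B, C) =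
      (((cutStats F).filter (·.1 = A)).map fun s => nCuts B C s.2).sum := by
  rw [recutRootStats, Multiset.count_bind, cutStats, Multiset.filter_map, Multiset.map_map,
    sum_map_filter]
  refine congrArg Multiset.sum (Multiset.map_congr rfl fun c _ => ?_)
  simp only [Function.comp_apply, cutStat]
  by_cases h : clF (Pcut F c) = A
  · simp only [h, if_true]
    rw [Multiset.count_map_eq_count' _ _ (Prod.mk_right_injective A), nCuts_clF]
  · simp only [h, if_false]
    refine Multiset.count_eq_zero.2 fun hmem => h ?_
    obtain ⟨_, _, he⟩ := Multiset.mem_map.1 hmem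
    exact (Prod.mk.inj he).1

lemma count_recutPrunedStats (F : List RTree) (A B C : ForestClass) :
    (recutPrunedStats F).count (A, B, C) =
      (((cutStats F).filter (·.2 = C)).map fun s => nCuts A B s.1).sum := by
  rw [recutPrunedStats, Multiset.count_bind, cutStats, Multiset.filter_map, Multiset.map_map,
    sum_map_filter]
  refine congrArg Multiset.sum (Multiset.map_congr rfl fun c _ => ?_)
  simp only [Function.comp_apply, cutStat]
  by_cases h : clF (Rcut F c) = C
  · simp only [h, if_true]
    rw [Multiset.count_map_eq_count' (fun s => (s.1, s.2, C)) _
      (fun s s' he => by simpa [Prod.ext_iff] using he) (A, B), nCuts_clF]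
  · simp only [h, if_false]
    refine Multiset.count_eq_zero.2 fun hmem => h ?_
    obtain ⟨_, _, he⟩ := Multiset.mem_map.1 hmem
    simp only [Prod.mk.injEq] at he
    exact he.2.2

theorem sum_nCuts_snd_eq_sum_nCuts_fst (F : List RTree) (A B C : ForestClass) :
    (((cutStats F).filter (·.1 = A)).map fun s => nCuts B C s.2).sum =
      (((cutStats F).filter (·.2 = C)).map fun s => nCuts A B s.1).sum := by
  rw [← count_recutRootStats, recutRootStats_eq_recutPrunedStats, count_recutPrunedStats]

lemma nCuts_zero (X Y : TreeClass) : nCuts {X} {Y} 0 = 0 := by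
  rw [← clF_nil, nCuts_clF, cutStats_nil]
  simp

lemma card_snd_le_one_of_mem_cutStats {t : RTree} {s : ForestClass × ForestClass}
    (hs : s ∈ cutStats [t]) : Multiset.card s.2 ≤ 1 := by
  obtain ⟨l⟩ := t
  rw [cutStats_node] at hs
  rcases Multiset.mem_cons.1 hs with rfl | hs
  · simp
  · obtain ⟨u, -, rfl⟩ := Multiset.mem_map.1 hs
    simp

lemma exists_mem_treeCand_of_nCuts_ne_zero {M : ForestClass} {X Y : TreeClass}
    (hM : Multiset.card M ≤ 1) (h : nCuts {X} {Y} M ≠ 0) :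
    ∃ S ∈ treeCand (sizeT X + sizeT Y), M = {S} := by
  obtain ⟨S, rfl⟩ : ∃ S, M = {S} := by
    refine Multiset.card_eq_one.1 (le_antisymm hM (Multiset.card_pos.2 fun hM0 => h ?_))
    rw [hM0, nCuts_zero]
  rw [← aCount_eq_nCuts] at h
  exact ⟨S, mem_treeCand (by rw [sizeT_eq_of_aCount_ne_zero h]; omega), rfl⟩

lemma aCount_eq_countP (X Y T : TreeClass) :
    aCount X Y T = (cutStats [repT T]).countP fun s => s.1 = {X} ∧ s.2 = {Y} := by
  rw [aCount_eq_nCuts, ← clF_repT T, nCuts_clF, Multiset.count]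
  exact Multiset.countP_congr rfl fun s _ => by simp [Prod.ext_iff, eq_comm]

lemma sum_aCount_mul_aCount_right (T₁ T₂ T₃ T : TreeClass) :
    ∑ S ∈ treeCand (sizeT T₂ + sizeT T₃), aCount T₂ T₃ S * aCount T₁ S T =
      (((cutStats [repT T]).filter (·.1 = {T₁})).map fun s => nCuts {T₂} {T₃} s.2).sum := by
  simp only [aCount_eq_nCuts T₂ T₃, aCount_eq_countP T₁]
  exact sum_mul_countP_eq_sum_filter _ _ Prod.snd _ (nCuts {T₂} {T₃})
    fun s hs _ h =>
      exists_mem_treeCand_of_nCuts_ne_zero (card_snd_le_one_of_mem_cutStats hs) h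

lemma sum_aCount_mul_aCount_left (T₁ T₂ T₃ T : TreeClass) :
    ∑ S ∈ treeCand (sizeT T₁ + sizeT T₂), aCount T₁ T₂ S * aCount S T₃ T =
      (((cutStats [repT T]).filter fun s => Multiset.card s.1 = 1 ∧ s.2 = {T₃}).map
        fun s => nCuts {T₁} {T₂} s.1).sum := by
  have hcount : ∀ S, aCount S T₃ T = (cutStats [repT T]).countP
      fun s => (Multiset.card s.1 = 1 ∧ s.2 = {T₃}) ∧ s.1 = {S} := fun S => by
    rw [aCount_eq_countP]
    exact Multiset.countP_congr rfl fun s _ => propext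
      ⟨fun ⟨h₁, h₂⟩ => ⟨⟨by simp [h₁], h₂⟩, h₁⟩, fun ⟨⟨_, h₂⟩, h₁⟩ => ⟨h₁, h₂⟩⟩
  simp only [aCount_eq_nCuts T₁ T₂, hcount]
  exact sum_mul_countP_eq_sum_filter _ _ Prod.fst _ (nCuts {T₁} {T₂})
    fun s _ hs h => exists_mem_treeCand_of_nCuts_ne_zero hs.1.le h

lemma nCuts_comm {M : ForestClass} (hM : Multiset.card M ≠ 1) (X Y : TreeClass) :
    nCuts {X} {Y} M = nCuts {Y} {X} M := by
  rw [← clF_repF M, nCuts_clF, nCuts_clF]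
  exact count_cutStats_comm (by rwa [← card_clF, clF_repF]) X Y

/-- The coefficient of `T` in the grafting of `T₁` and `T₂` simultaneously onto `T₃`: it counts
the cuts of `T` at two incomparable edges with pruned trees `T₁`, `T₂` and root part `T₃`. -/
noncomputable def doubleGraftCoeff (T₁ T₂ T₃ T : TreeClass) : ℕ :=
  (((cutStats [repT T]).filter fun s => ¬Multiset.card s.1 = 1 ∧ s.2 = {T₃}).map
    fun s => nCuts {T₁} {T₂} s.1).sum

lemma doubleGraftCoeff_comm (T₁ T₂ T₃ T : TreeClass) :
    doubleGraftCoeff T₁ T₂ T₃ T = doubleGraftCoeff T₂ T₁ T₃ T :=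
  congrArg Multiset.sum <| Multiset.map_congr rfl fun _ hs =>
    nCuts_comm (Multiset.mem_filter.1 hs).2.1 _ _

theorem sum_aCount_mul_aCount_add_doubleGraftCoeff (T₁ T₂ T₃ T : TreeClass) :
    ∑ S ∈ treeCand (sizeT T₁ + sizeT T₂), aCount T₁ T₂ S * aCount S T₃ T +
        doubleGraftCoeff T₁ T₂ T₃ T =
      ∑ S ∈ treeCand (sizeT T₂ + sizeT T₃), aCount T₂ T₃ S * aCount T₁ S T := by
  rw [sum_aCount_mul_aCount_left, sum_aCount_mul_aCount_right, sum_nCuts_snd_eq_sum_nCuts_fst,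
    doubleGraftCoeff, ← Multiset.sum_add, ← Multiset.map_add, ← Multiset.filter_filter,
    ← Multiset.filter_filter, Multiset.filter_add_not]

/-! ### The grafting product -/

noncomputable def graftL : nT →ₗ[ℚ] nT →ₗ[ℚ] nT :=
  Finsupp.lsum ℚ fun T₁ => LinearMap.toSpanSingleton ℚ (nT →ₗ[ℚ] nT)
    (Finsupp.lsum ℚ fun T₂ => LinearMap.toSpanSingleton ℚ nT (graftBasis T₁ T₂))

lemma graftL_apply (x y : nT) : graftL x y = graft x y := by
  simp only [graftL, graft, Finsupp.lsum_apply, LinearMap.finsupp_sum_apply,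
    LinearMap.toSpanSingleton_apply, LinearMap.smul_apply, Finsupp.smul_sum, smul_smul]

lemma graft_add_left (x y z : nT) : graft (x + y) z = graft x z + graft y z := by
  simp only [← graftL_apply, map_add, LinearMap.add_apply]

lemma graft_add_right (x y z : nT) : graft x (y + z) = graft x y + graft x z := by
  simp only [← graftL_apply, map_add]

lemma graft_smul_left (a : ℚ) (x y : nT) : graft (a • x) y = a • graft x y := by
  simp only [← graftL_apply, map_smul, LinearMap.smul_apply]

lemma graft_smul_right (a : ℚ) (x y : nT) : graft x (a • y) = a • graft x y := by
  simp only [← graftL_apply, map_smul]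

lemma graft_zero_left (y : nT) : graft 0 y = 0 := by
  simp only [← graftL_apply, map_zero, LinearMap.zero_apply]

lemma graft_zero_right (x : nT) : graft x 0 = 0 := by
  simp only [← graftL_apply, map_zero]

lemma graft_tau (T₁ T₂ : TreeClass) : graft (tau T₁) (tau T₂) = graftBasis T₁ T₂ := by
  simp [graft, tau]

lemma graftBasis_apply (T₁ T₂ T : TreeClass) : graftBasis T₁ T₂ T = aCount T₁ T₂ T := by
  rw [graftBasis, Finsupp.finsetSum_apply]
  simp only [tau, Finsupp.smul_apply, Finsupp.single_apply, smul_eq_mul, mul_ite, mul_one,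
    mul_zero, Finset.sum_ite_eq']
  split_ifs with hT
  · rfl
  · rw [eq_comm, Nat.cast_eq_zero]
    by_contra h
    exact hT (mem_treeCand (by rw [sizeT_eq_of_aCount_ne_zero h]; omega))

lemma graft_graftBasis_tau_apply (T₁ T₂ T₃ T : TreeClass) :
    graft (graftBasis T₁ T₂) (tau T₃) T =
      ((∑ S ∈ treeCand (sizeT T₁ + sizeT T₂), aCount T₁ T₂ S * aCount S T₃ T : ℕ) : ℚ) := by
  rw [graftBasis, ← graftL_apply]
  simp only [map_sum, map_smul, LinearMap.sum_apply, LinearMap.smul_apply, graftL_apply, graft_tau,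
    Finsupp.finsetSum_apply, Finsupp.smul_apply, graftBasis_apply, smul_eq_mul]
  push_cast
  rfl

lemma graft_tau_graftBasis_apply (T₁ T₂ T₃ T : TreeClass) :
    graft (tau T₁) (graftBasis T₂ T₃) T =
      ((∑ S ∈ treeCand (sizeT T₂ + sizeT T₃), aCount T₂ T₃ S * aCount T₁ S T : ℕ) : ℚ) := by
  rw [graftBasis, ← graftL_apply]
  simp only [map_sum, map_smul, graftL_apply, graft_tau, Finsupp.finsetSum_apply,
    Finsupp.smul_apply, graftBasis_apply, smul_eq_mul]
  push_cast
  rfl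

theorem graft_preLie_tau (T₁ T₂ T₃ : TreeClass) :
    graft (graft (tau T₁) (tau T₂)) (tau T₃) - graft (tau T₁) (graft (tau T₂) (tau T₃)) =
      graft (graft (tau T₂) (tau T₁)) (tau T₃) - graft (tau T₂) (graft (tau T₁) (tau T₃)) := by
  ext T
  have h₁₂ := sum_aCount_mul_aCount_add_doubleGraftCoeff T₁ T₂ T₃ T
  have h₂₁ := sum_aCount_mul_aCount_add_doubleGraftCoeff T₂ T₁ T₃ T
  rw [doubleGraftCoeff_comm] at h₂₁
  simp only [graft_tau, Finsupp.sub_apply, graft_graftBasis_tau_apply, graft_tau_graftBasis_apply]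
  rw [← h₁₂, ← h₂₁]
  push_cast
  ring

lemma single_eq_smul_tau (T : TreeClass) (a : ℚ) : (Finsupp.single T a : nT) = a • tau T := by
  rw [tau, Finsupp.smul_single_one]

theorem graft_preLie (x y z : nT) :
    graft (graft x y) z - graft x (graft y z) = graft (graft y x) z - graft y (graft x z) := by
  induction x using Finsupp.induction_linear with
  | zero => simp only [graft_zero_left, graft_zero_right, sub_zero]
  | add x₁ x₂ h₁ h₂ =>
    simp only [graft_add_left, graft_add_right]
    linear_combination (norm := module) h₁ + h₂
  | single T₁ a =>
    induction y using Finsupp.induction_linear with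
    | zero => simp only [graft_zero_left, graft_zero_right, sub_zero]
    | add y₁ y₂ h₁ h₂ =>
      simp only [graft_add_left, graft_add_right]
      linear_combination (norm := module) h₁ + h₂
    | single T₂ b =>
      induction z using Finsupp.induction_linear with
      | zero => simp only [graft_zero_right, sub_zero]
      | add z₁ z₂ h₁ h₂ =>
        simp only [graft_add_right]
        linear_combination (norm := module) h₁ + h₂
      | single T₃ c =>
        simp only [single_eq_smul_tau, graft_smul_left, graft_smul_right, smul_smul]
        linear_combination (norm := module) (a * b * c) • graft_preLie_tau T₁ T₂ T₃

/-- `nT` with grafting as multiplication (on `nT` itself, `*` is the pointwise product). -/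
def GraftAlgebra : Type := nT

noncomputable instance : LeftPreLieRing GraftAlgebra :=
  { (inferInstance : AddCommGroup nT) with
    mul := graft
    left_distrib := graft_add_right
    right_distrib := graft_add_left
    zero_mul := graft_zero_left
    mul_zero := graft_zero_right
    assoc_symm' := graft_preLie }

noncomputable instance : LeftPreLieAlgebra ℚ GraftAlgebra :=
  { (inferInstance : Module ℚ nT) with
    smul_assoc := graft_smul_left
    smul_comm := fun a x y => (graft_smul_right a x y).symm }

/-- The grafting product on `n_T` satisfies the pre-Lie identity
(for all rooted trees, hence by bilinearity for all elements of `n_T`), and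
consequently the Connes–Kreimer bracket `[x,y] = x*y − y*x` is bilinear,
antisymmetric and satisfies the Jacobi identity, making `n_T` a Lie algebra
over ℚ. -/
theorem grafting_preLie_and_Lie :
    -- the pre-Lie identity
    (∀ x y z : nT,
      graft (graft x y) z - graft x (graft y z)
        = graft (graft y x) z - graft y (graft x z)) ∧
    -- the bracket is bilinear
    (∀ x y z : nT, ckBracket (x + y) z = ckBracket x z + ckBracket y z) ∧
    (∀ x y z : nT, ckBracket x (y + z) = ckBracket x y + ckBracket x z) ∧
    (∀ (a : ℚ) (x y : nT), ckBracket (a • x) y = a • ckBracket x y) ∧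
    (∀ (a : ℚ) (x y : nT), ckBracket x (a • y) = a • ckBracket x y) ∧
    -- antisymmetric
    (∀ x y : nT, ckBracket y x = - ckBracket x y) ∧
    -- and satisfies the Jacobi identity
    (∀ x y z : nT,
      ckBracket x (ckBracket y z) + ckBracket y (ckBracket z x)
        + ckBracket z (ckBracket x y) = 0) := by
  refine ⟨graft_preLie, fun x y z => ?_, fun x y z => ?_, fun a x y => ?_, fun a x y => ?_,
    fun x y => ?_, fun x y z => ?_⟩
  -- `ckBracket` is by definition the commutator bracket `⁅x, y⁆ = x * y - y * x` of `GraftAlgebra`.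
  · exact add_lie (L := GraftAlgebra) (M := GraftAlgebra) x y z
  · exact lie_add (L := GraftAlgebra) (M := GraftAlgebra) x y z
  · exact smul_lie (L := GraftAlgebra) (M := GraftAlgebra) a x y
  · exact lie_smul (L := GraftAlgebra) (M := GraftAlgebra) a x y
  · exact (lie_skew (L := GraftAlgebra) y x).symm
  · exact lie_jacobi (L := GraftAlgebra) x y z

end CK
end

section
/- Let B be a rooted forest (with a fixed labeling of its vertices) and let C be an admissible cut of B. For admissible cuts D, D' of B, write D ⊆ D' if every vertex of P_D(B) is a vertex of P_{D'}(B). Then there is a bijection D ↦ D̄ from the set of admissible cuts D of B with C ⊆ D onto the set of admissible cuts of R_C(B), which preserves inclusion (for cuts D, D' of B containing C, D ⊆ D' if and only if D̄ ⊆ D̄') and satisfies R_D(B) ≅ R_{D̄}(R_C(B)) for every such D. -/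
open scoped Classical

namespace CK

/-- Shift the index of the tree a vertex position refers to by one. -/
def bump : List ℕ → List ℕ
  | [] => []
  | i :: p => (i + 1) :: p

/-- The vertex positions of a concrete (labeled) forest: a vertex is addressed
by the list of child indices leading to it (the head being the index of its
tree in the forest). -/
def posF : List RTree → List (List ℕ)
  | [] => []
  | .node l :: ts => [0] :: ((posF l).map (List.cons 0) ++ (posF ts).map bump)

/-- The vertices of `B` lying in the pruned part `P_D(B)` of a cut `D`. -/
def pVerts : List RTree → List CutShape → List (List ℕ)
  | [], _ => []
  | _ :: _, [] => []
  | .node l :: ts, .full :: cs =>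
      [0] :: ((posF l).map (List.cons 0) ++ (pVerts ts cs).map bump)
  | .node l :: ts, .branch ds :: cs =>
      (pVerts l ds).map (List.cons 0) ++ (pVerts ts cs).map bump

/-- `D ⊆ D'` for admissible cuts of the (labeled) forest `B`: every vertex of
`P_D(B)` is a vertex of `P_{D'}(B)`. -/
def cutLE (B : List RTree) (D D' : List CutShape) : Prop :=
  ∀ p ∈ pVerts B D, p ∈ pVerts B D'

/-! A cut `D` with `C ⊆ D` cuts nothing inside `P_C(B)`, so it is determined by what it does on
`R_C(B)`: following the shape of `C`, dropping the trees that `C` removes entirely, `D` restricts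
to a cut `D̄` of `R_C(B)`, and conversely every cut of `R_C(B)` extends to `B` by the full cuts
of `C`. Vertex sets of pruned parts, and root parts, are computed tree by tree and child by
child, so the bijection, its monotonicity in both directions and `R_D(B) = R_{D̄}(R_C(B))`
(an equality, not just an isomorphism) all follow by structural induction on `C`. -/

inductive IsCut : List RTree → List CutShape → Prop
  | nil : IsCut [] []
  | full {l ts cs} : IsCut ts cs → IsCut (.node l :: ts) (.full :: cs)
  | branch {l ts ds cs} : IsCut l ds → IsCut ts cs → IsCut (.node l :: ts) (.branch ds :: cs)

theorem mem_cutsF_iff_isCut : ∀ {B : List RTree} {C : List CutShape}, C ∈ cutsF B ↔ IsCut B C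
  | [], C => by
    constructor
    · intro h
      obtain rfl : C = [] := by simpa [cutsF] using h
      exact .nil
    · rintro ⟨⟩
      simp [cutsF]
  | .node l :: ts, C => by
    constructor
    · intro h
      simp only [cutsF, List.mem_flatMap, List.mem_cons, List.mem_map] at h
      obtain ⟨c, hc, cs, hcs, rfl⟩ := h
      rcases hc with rfl | ⟨ds, hds, rfl⟩
      · exact .full (mem_cutsF_iff_isCut.1 hcs)
      · exact .branch (mem_cutsF_iff_isCut.1 hds) (mem_cutsF_iff_isCut.1 hcs)
    · intro h
      simp only [cutsF, List.mem_flatMap, List.mem_cons, List.mem_map]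
      cases h with
      | full hcs => exact ⟨_, .inl rfl, _, mem_cutsF_iff_isCut.2 hcs, rfl⟩
      | branch hds hcs =>
        exact ⟨_, .inr ⟨_, mem_cutsF_iff_isCut.2 hds, rfl⟩, _,
          mem_cutsF_iff_isCut.2 hcs, rfl⟩

theorem bump_injective : Function.Injective bump := by
  intro p q h
  cases p <;> cases q <;> simp_all [bump]

theorem bump_ne_cons_zero (q p : List ℕ) : bump q ≠ 0 :: p := by
  cases q <;> simp [bump]

section Positions

variable {X Y X' Y' : List (List ℕ)}

theorem cons_zero_mem_map_append_iff {p : List ℕ} :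
    0 :: p ∈ X.map (List.cons 0) ++ Y.map bump ↔ p ∈ X := by
  simp [bump_ne_cons_zero]

theorem bump_mem_map_append_iff {q : List ℕ} :
    bump q ∈ X.map (List.cons 0) ++ Y.map bump ↔ q ∈ Y := by
  simp [bump_injective.eq_iff, (bump_ne_cons_zero q _).symm]

theorem map_append_map_bump_subset_iff :
    X.map (List.cons 0) ++ Y.map bump ⊆ X'.map (List.cons 0) ++ Y'.map bump ↔
      X ⊆ X' ∧ Y ⊆ Y' := by
  constructor
  · intro h
    exact ⟨fun p hp => cons_zero_mem_map_append_iff.1 (h (cons_zero_mem_map_append_iff.2 hp)),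
      fun q hq => bump_mem_map_append_iff.1 (h (bump_mem_map_append_iff.2 hq))⟩
  · rintro ⟨hX, hY⟩
    exact List.append_subset.2
      ⟨List.Subset.trans (List.map_subset _ hX) (List.subset_append_left _ _),
        List.Subset.trans (List.map_subset _ hY) (List.subset_append_right _ _)⟩

end Positions

/-- Positions are relative to the root of `node l`, which is `[]`. -/
def treePVerts (l : List RTree) : CutShape → List (List ℕ)
  | .full => [] :: posF l
  | .branch es => pVerts l es

theorem posF_cons (l ts : List RTree) :
    posF (.node l :: ts) = ([] :: posF l).map (List.cons 0) ++ (posF ts).map bump := by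
  simp [posF]

theorem pVerts_cons (l ts : List RTree) (d : CutShape) (ds : List CutShape) :
    pVerts (.node l :: ts) (d :: ds) =
      (treePVerts l d).map (List.cons 0) ++ (pVerts ts ds).map bump := by
  cases d <;> simp [pVerts, treePVerts]

theorem nil_not_mem_pVerts : ∀ (B : List RTree) (D : List CutShape), [] ∉ pVerts B D
  | [], _ | _ :: _, [] => by simp [pVerts]
  | .node l :: ts, d :: ds => by
    have ih := nil_not_mem_pVerts ts ds
    rw [pVerts_cons]
    simp only [List.mem_append, List.mem_map]
    rintro (⟨_, _, h⟩ | ⟨q, hq, h⟩)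
    · exact List.cons_ne_nil _ _ h
    · cases q <;> simp_all [bump]

theorem pVerts_subset_posF : ∀ (B : List RTree) (D : List CutShape), pVerts B D ⊆ posF B
  | [], _ | _ :: _, [] => by simp [pVerts]
  | .node l :: ts, d :: ds => by
    rw [pVerts_cons, posF_cons, map_append_map_bump_subset_iff]
    refine ⟨?_, pVerts_subset_posF ts ds⟩
    cases d with
    | full => exact List.Subset.refl _
    | branch es => exact List.Subset.trans (pVerts_subset_posF l es) (List.subset_cons_self _ _)

theorem cutLE_cons_cons {l ts : List RTree} {c d : CutShape} {cs ds : List CutShape} :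
    cutLE (.node l :: ts) (c :: cs) (d :: ds) ↔
      treePVerts l c ⊆ treePVerts l d ∧ cutLE ts cs ds := by
  rw [cutLE, pVerts_cons, pVerts_cons]
  exact map_append_map_bump_subset_iff

@[simp]
theorem cutLE_full_left {l ts : List RTree} {d : CutShape} {cs ds : List CutShape} :
    cutLE (.node l :: ts) (.full :: cs) (d :: ds) ↔ d = .full ∧ cutLE ts cs ds := by
  rw [cutLE_cons_cons]
  cases d with
  | full => simp
  | branch es =>
    simp only [reduceCtorEq, false_and, iff_false, not_and]
    exact fun h => absurd (h List.mem_cons_self) (nil_not_mem_pVerts l es)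

@[simp]
theorem cutLE_branch_full {l ts : List RTree} {es cs ds : List CutShape} :
    cutLE (.node l :: ts) (.branch es :: cs) (.full :: ds) ↔ cutLE ts cs ds := by
  have : pVerts l es ⊆ [] :: posF l :=
    List.Subset.trans (pVerts_subset_posF l es) (List.subset_cons_self _ _)
  simp [cutLE_cons_cons, treePVerts, this]

@[simp]
theorem cutLE_branch_branch {l ts : List RTree} {es fs cs ds : List CutShape} :
    cutLE (.node l :: ts) (.branch es :: cs) (.branch fs :: ds) ↔
      cutLE l es fs ∧ cutLE ts cs ds :=
  cutLE_cons_cons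

@[simp]
theorem cutLE_nil (D D' : List CutShape) : cutLE [] D D' := by
  simp [cutLE, pVerts]

/-- `quotCut C D` is `D̄`: the part of `D` lying on `R_C(B)`. -/
def quotCut : List CutShape → List CutShape → List CutShape
  | .full :: cs, _ :: ds => quotCut cs ds
  | .branch _ :: cs, .full :: ds => .full :: quotCut cs ds
  | .branch es :: cs, .branch fs :: ds => .branch (quotCut es fs) :: quotCut cs ds
  | _, _ => []

def liftCut : List CutShape → List CutShape → List CutShape
  | .full :: cs, es => .full :: liftCut cs es
  | .branch _ :: cs, .full :: es => .full :: liftCut cs es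
  | .branch ds :: cs, .branch fs :: es => .branch (liftCut ds fs) :: liftCut cs es
  | _, _ => []

namespace IsCut

variable {B : List RTree} {C D D' E : List CutShape}

theorem quotCut_isCut (hC : IsCut B C) (hD : IsCut B D) (hCD : cutLE B C D) :
    IsCut (Rcut B C) (quotCut C D) := by
  induction hC generalizing D with
  | nil => cases hD; simpa [Rcut, quotCut] using IsCut.nil
  | full _ ih =>
    cases hD with
    | full hds => simpa only [Rcut, quotCut] using ih hds (cutLE_full_left.1 hCD).2
    | branch => simp at hCD
  | branch _ _ ihl iht =>
    simp only [Rcut]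
    cases hD with
    | full hds => simpa only [quotCut] using .full (iht hds (cutLE_branch_full.1 hCD))
    | branch hfs hds =>
      obtain ⟨hl, ht⟩ := cutLE_branch_branch.1 hCD
      simpa only [quotCut] using .branch (ihl hfs hl) (iht hds ht)

theorem Rcut_eq_Rcut_quotCut (hC : IsCut B C) (hD : IsCut B D) (hCD : cutLE B C D) :
    Rcut B D = Rcut (Rcut B C) (quotCut C D) := by
  induction hC generalizing D with
  | nil => cases hD; simp [Rcut]
  | full _ ih =>
    cases hD with
    | full hds => simpa [Rcut, quotCut] using ih hds (cutLE_full_left.1 hCD).2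
    | branch => simp at hCD
  | branch _ _ ihl iht =>
    cases hD with
    | full hds => simpa [Rcut, quotCut] using iht hds (cutLE_branch_full.1 hCD)
    | branch hfs hds =>
      obtain ⟨hl, ht⟩ := cutLE_branch_branch.1 hCD
      simp only [Rcut, quotCut]
      rw [ihl hfs hl, iht hds ht]

theorem liftCut_isCut (hC : IsCut B C) (hE : IsCut (Rcut B C) E) :
    IsCut B (liftCut C E) ∧ cutLE B C (liftCut C E) := by
  induction hC generalizing E with
  | nil => exact ⟨by simpa [liftCut] using IsCut.nil, cutLE_nil _ _⟩
  | full _ ih =>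
    simp only [Rcut] at hE
    simp only [liftCut]
    obtain ⟨hcut, hle⟩ := ih hE
    exact ⟨.full hcut, cutLE_full_left.2 ⟨rfl, hle⟩⟩
  | branch _ _ ihl iht =>
    simp only [Rcut] at hE
    cases hE with
    | full hes =>
      simp only [liftCut]
      obtain ⟨hcut, hle⟩ := iht hes
      exact ⟨.full hcut, cutLE_branch_full.2 hle⟩
    | branch hfs hes =>
      simp only [liftCut]
      obtain ⟨hcutl, hlel⟩ := ihl hfs
      obtain ⟨hcutt, hlet⟩ := iht hes
      exact ⟨.branch hcutl hcutt, cutLE_branch_branch.2 ⟨hlel, hlet⟩⟩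

theorem quotCut_liftCut (hC : IsCut B C) (hE : IsCut (Rcut B C) E) :
    quotCut C (liftCut C E) = E := by
  induction hC generalizing E with
  | nil => simp only [Rcut] at hE; cases hE; simp [liftCut, quotCut]
  | full _ ih => simp only [Rcut] at hE; simpa [liftCut, quotCut] using ih hE
  | branch _ _ ihl iht =>
    simp only [Rcut] at hE
    cases hE with
    | full hes => simp only [liftCut, quotCut]; rw [iht hes]
    | branch hfs hes => simp only [liftCut, quotCut]; rw [ihl hfs, iht hes]

theorem liftCut_quotCut (hC : IsCut B C) (hD : IsCut B D) (hCD : cutLE B C D) :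
    liftCut C (quotCut C D) = D := by
  induction hC generalizing D with
  | nil => cases hD; simp [liftCut, quotCut]
  | full _ ih =>
    cases hD with
    | full hds => simp only [quotCut, liftCut]; rw [ih hds (cutLE_full_left.1 hCD).2]
    | branch => simp at hCD
  | branch _ _ ihl iht =>
    cases hD with
    | full hds => simp only [quotCut, liftCut]; rw [iht hds (cutLE_branch_full.1 hCD)]
    | branch hfs hds =>
      obtain ⟨hl, ht⟩ := cutLE_branch_branch.1 hCD
      simp only [quotCut, liftCut]
      rw [ihl hfs hl, iht hds ht]

theorem cutLE_iff_cutLE_quotCut (hC : IsCut B C) (hD : IsCut B D) (hD' : IsCut B D')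
    (hCD : cutLE B C D) (hCD' : cutLE B C D') :
    cutLE B D D' ↔ cutLE (Rcut B C) (quotCut C D) (quotCut C D') := by
  induction hC generalizing D D' with
  | nil => simp [Rcut]
  | full _ ih =>
    cases hD with
    | branch => simp at hCD
    | full hds =>
      cases hD' with
      | branch => simp at hCD'
      | full hds' =>
        simp only [cutLE_full_left, true_and, Rcut, quotCut] at hCD hCD' ⊢
        exact ih hds hds' hCD hCD'
  | branch _ _ ihl iht =>
    cases hD with
    | full hds =>
      cases hD' with
      | full hds' =>
        simp only [cutLE_branch_full, cutLE_full_left, true_and, Rcut, quotCut] at hCD hCD' ⊢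
        exact iht hds hds' hCD hCD'
      | branch => simp [quotCut, Rcut]
    | branch hfs hds =>
      cases hD' with
      | full hds' =>
        simp only [cutLE_branch_full, cutLE_branch_branch, Rcut, quotCut] at hCD hCD' ⊢
        exact iht hds hds' hCD.2 hCD'
      | branch hfs' hds' =>
        simp only [cutLE_branch_branch, Rcut, quotCut] at hCD hCD' ⊢
        exact and_congr (ihl hfs hfs' hCD.1 hCD'.1) (iht hds hds' hCD.2 hCD'.2)

end IsCut

def quotCutEquiv {B : List RTree} {C : List CutShape} (hC : IsCut B C) :
    {D : List CutShape // D ∈ cutsF B ∧ cutLE B C D} ≃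
      {E : List CutShape // E ∈ cutsF (Rcut B C)} where
  toFun D := ⟨quotCut C D.1, mem_cutsF_iff_isCut.2 <|
    hC.quotCut_isCut (mem_cutsF_iff_isCut.1 D.2.1) D.2.2⟩
  invFun E :=
    have h := hC.liftCut_isCut (mem_cutsF_iff_isCut.1 E.2)
    ⟨liftCut C E.1, mem_cutsF_iff_isCut.2 h.1, h.2⟩
  left_inv D := Subtype.ext <| hC.liftCut_quotCut (mem_cutsF_iff_isCut.1 D.2.1) D.2.2
  right_inv E := Subtype.ext <| hC.quotCut_liftCut (mem_cutsF_iff_isCut.1 E.2)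

/-- STATEMENT 19: for a (labeled) rooted forest `B` and an admissible cut `C`
of `B`, there is a bijection `D ↦ D̄` from the admissible cuts `D` of `B` with
`C ⊆ D` onto the admissible cuts of `R_C(B)` which preserves inclusion in both
directions and satisfies `R_D(B) ≅ R_{D̄}(R_C(B))`. -/
theorem cuts_above_correspond_to_cuts_of_quotient
    (B : List RTree) (C : List CutShape) (hC : C ∈ cutsF B) :
    ∃ Φ : {D : List CutShape // D ∈ cutsF B ∧ cutLE B C D}
          ≃ {E : List CutShape // E ∈ cutsF (Rcut B C)},
      (∀ D D' : {D : List CutShape // D ∈ cutsF B ∧ cutLE B C D},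
        cutLE B D.1 D'.1 ↔ cutLE (Rcut B C) (Φ D).1 (Φ D').1) ∧
      (∀ D : {D : List CutShape // D ∈ cutsF B ∧ cutLE B C D},
        clF (Rcut B D.1) = clF (Rcut (Rcut B C) (Φ D).1)) := by
  rw [mem_cutsF_iff_isCut] at hC
  refine ⟨quotCutEquiv hC, fun D D' => ?_, fun D => ?_⟩
  · exact hC.cutLE_iff_cutLE_quotCut (mem_cutsF_iff_isCut.1 D.2.1)
      (mem_cutsF_iff_isCut.1 D'.2.1) D.2.2 D'.2.2
  · exact congrArg clF (hC.Rcut_eq_Rcut_quotCut (mem_cutsF_iff_isCut.1 D.2.1) D.2.2)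

end CK
end
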